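/- Let K be a convex body in ℝⁿ with 0 in its interior and let f : K° → ℝ be a positive integrable function. For t ≥ 0 define K_f[t] = {x ∈ ℝⁿ : (2/ω(S^{n-1})) ∫_{K° \ K_x°} f(ξ) dξ ≤ t}, where K_x = conv({x} ∪ K). Then K_f[t] is star-convex with respect to 0, i.e., for every x ∈ K_f[t] the segment [0,x] is contained in K_f[t]. -/

import Mathlib

open MeasureTheory Metric Set
open scoped RealInnerProductSpace

noncomputable section

abbrev Euc (n : ℕ) := EuclideanSpace ℝ (Fin n)

/-- The polar body `K° = {y : ⟨x,y⟩ ≤ 1 for all x ∈ K}`. -/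
def polarBody {n : ℕ} (K : Set (Euc n)) : Set (Euc n) := {y | ∀ x ∈ K, ⟪x, y⟫ ≤ 1}

/-- The support function `h_K(u) = sup_{x ∈ K} ⟨x,u⟫`. -/
def suppFn {n : ℕ} (K : Set (Euc n)) (u : Euc n) : ℝ := sSup ((fun x => ⟪x, u⟫) '' K)

/-- Surface area `ω(S^{n-1})` of the unit sphere, as the `(n-1)`-dimensional
Hausdorff measure of the sphere. -/
def sphereArea (n : ℕ) : ℝ := (μH[(n : ℝ) - 1] (sphere (0 : Euc n) 1)).toReal

/-- `K_x = conv({x} ∪ K)`, the convex hull of `x` and `K`. -/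
def hullWith {n : ℕ} (K : Set (Euc n)) (x : Euc n) : Set (Euc n) :=
  convexHull ℝ ({x} ∪ K)

/-- `w_f(x) = (2/ω(S^{n-1})) ∫_{K° \ K_x°} f dξ`. -/
def wf {n : ℕ} (K : Set (Euc n)) (f : Euc n → ℝ) (x : Euc n) : ℝ :=
  (2 / sphereArea n) * ∫ ξ in polarBody K \ polarBody (hullWith K x), f ξ

/-- The mean width body `K_f[t] = {x : w_f(x) ≤ t}`. -/
def mwBody {n : ℕ} (K : Set (Euc n)) (f : Euc n → ℝ) (t : ℝ) : Set (Euc n) :=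
  {x | wf K f x ≤ t}

lemma isClosed_polarBody {n : ℕ} (S : Set (Euc n)) : IsClosed (polarBody S) := by
  simp only [polarBody, ofPred_forall]
  exact isClosed_biInter fun z _ =>
    isClosed_le (continuous_const.inner continuous_id) continuous_const

lemma polarBody_anti {n : ℕ} : Antitone (polarBody (n := n)) :=
  fun _ _ hST _ hy z hz => hy z (hST hz)

lemma hullWith_subset_of_mem {n : ℕ} {K : Set (Euc n)} {x y : Euc n}
    (hy : y ∈ hullWith K x) : hullWith K y ⊆ hullWith K x :=
  convexHull_min (union_subset (singleton_subset_iff.2 hy)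
    ((subset_convexHull ℝ _).trans' subset_union_right)) (convex_convexHull ℝ _)

lemma segment_subset_hullWith {n : ℕ} {K : Set (Euc n)} (h0K : (0 : Euc n) ∈ K) (x : Euc n) :
    segment ℝ 0 x ⊆ hullWith K x :=
  (convex_convexHull ℝ _).segment_subset (subset_convexHull ℝ _ (Or.inr h0K))
    (subset_convexHull ℝ _ (Or.inl rfl))

lemma wf_le_of_hullWith_subset {n : ℕ} {K : Set (Euc n)} {f : Euc n → ℝ} {x y : Euc n}
    (hf : ∀ ξ ∈ polarBody K, 0 ≤ f ξ) (hfint : IntegrableOn f (polarBody K))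
    (hyx : hullWith K y ⊆ hullWith K x) : wf K f y ≤ wf K f x := by
  have hmeas : MeasurableSet (polarBody K \ polarBody (hullWith K x)) :=
    (isClosed_polarBody K).measurableSet.diff (isClosed_polarBody _).measurableSet
  have hint : ∫ ξ in polarBody K \ polarBody (hullWith K y), f ξ ≤
      ∫ ξ in polarBody K \ polarBody (hullWith K x), f ξ := by
    refine setIntegral_mono_set (hfint.mono_set sdiff_subset) ?_
      (sdiff_subset_sdiff_right (polarBody_anti hyx)).eventuallyLE
    filter_upwards [ae_restrict_mem hmeas] with ξ hξ using hf ξ hξ.1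
  exact mul_le_mul_of_nonneg_left hint (div_nonneg zero_le_two ENNReal.toReal_nonneg)

theorem stmt3_general (n : ℕ) (K : Set (Euc n))
    (h0K : (0 : Euc n) ∈ interior K)
    (f : Euc n → ℝ)
    (hfpos : ∀ ξ ∈ polarBody K, 0 < f ξ)
    (hfint : IntegrableOn f (polarBody K))
    (t : ℝ) :
    ∀ x ∈ mwBody K f t, segment ℝ 0 x ⊆ mwBody K f t := by
  intro x hx y hy
  have hyx : hullWith K y ⊆ hullWith K x :=
    hullWith_subset_of_mem (segment_subset_hullWith (interior_subset h0K) x hy)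
  exact le_trans (wf_le_of_hullWith_subset (fun ξ hξ => (hfpos ξ hξ).le) hfint hyx) hx

theorem stmt3 (n : ℕ) (hn : 1 ≤ n) (K : Set (Euc n))
    (hKcpt : IsCompact K) (hKconv : Convex ℝ K) (h0K : (0 : Euc n) ∈ interior K)
    (f : Euc n → ℝ)
    (hfpos : ∀ ξ ∈ polarBody K, 0 < f ξ)
    (hfint : IntegrableOn f (polarBody K))
    (t : ℝ) (ht : 0 ≤ t) :
    ∀ x ∈ mwBody K f t, segment ℝ 0 x ⊆ mwBody K f t :=
  stmt3_general n K h0K f hfpos hfint t
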